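/- arXiv:2503.08176 — 3 statements merged into one kernel-verified Lean document; each statement's English description precedes it below -/
import Mathlib

section
/- For any positive integers k₁,…,k_r, the region obtained from the reversed tuple has the same area as the original: |𝒯(k_r,…,k₁)| = |𝒯(k₁,…,k_r)|. -/
open MeasureTheory

/-- The BCZ transform T(x,y) = (y, ⌊(1+x)/y⌋·y − x). -/
noncomputable def bcz (p : ℝ × ℝ) : ℝ × ℝ :=
  (p.2, (⌊(1 + p.1) / p.2⌋ : ℝ) * p.2 - p.1)

/-- The Farey triangle 𝒯 = {(x,y) : 0 < x ≤ 1, 0 < y ≤ 1, x + y > 1}. -/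
def fareyTriangle : Set (ℝ × ℝ) :=
  {p | 0 < p.1 ∧ p.1 ≤ 1 ∧ 0 < p.2 ∧ p.2 ≤ 1 ∧ 1 < p.1 + p.2}

/-- The region 𝒯(k) = {(x,y) ∈ 𝒯 : ⌊(1+x)/y⌋ = k}. -/
def TT (k : ℕ) : Set (ℝ × ℝ) :=
  {p | p ∈ fareyTriangle ∧ ⌊(1 + p.1) / p.2⌋ = (k : ℤ)}

/-- The region 𝒯(k₁,…,k_r) = 𝒯(k₁) ∩ T⁻¹(𝒯(k₂)) ∩ ⋯ ∩ T^{−(r−1)}(𝒯(k_r)). -/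
noncomputable def TTlist (ks : List ℕ) : Set (ℝ × ℝ) :=
  ⋂ i : Fin ks.length, (bcz^[i.1]) ⁻¹' TT (ks.get i)

/-! ### Auxiliary maps -/

/-- The affine branch of the BCZ map on `TT k`. -/
def gmap (k : ℕ) (p : ℝ × ℝ) : ℝ × ℝ := (p.2, k * p.2 - p.1)

/-- The inverse of `gmap k`. -/
def ginv (k : ℕ) (p : ℝ × ℝ) : ℝ × ℝ := (k * p.1 - p.2, p.1)

/-- Iterated branch maps, head applied first. -/
def Gmap : List ℕ → ℝ × ℝ → ℝ × ℝ
  | [], p => p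
  | k :: l, p => Gmap l (gmap k p)

/-- Inverse of `Gmap`. -/
def Ginv : List ℕ → ℝ × ℝ → ℝ × ℝ
  | [], p => p
  | k :: l, p => ginv k (Ginv l p)

lemma ginv_gmap (k : ℕ) (p : ℝ × ℝ) : ginv k (gmap k p) = p := by
  simp [ginv, gmap]

lemma gmap_ginv (k : ℕ) (p : ℝ × ℝ) : gmap k (ginv k p) = p := by
  simp [ginv, gmap]

lemma Ginv_Gmap (l : List ℕ) (p : ℝ × ℝ) : Ginv l (Gmap l p) = p := by
  induction l generalizing p with
  | nil => rfl
  | cons k l ih => simp [Gmap, Ginv, ih, ginv_gmap]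

lemma Gmap_Ginv (l : List ℕ) (p : ℝ × ℝ) : Gmap l (Ginv l p) = p := by
  induction l generalizing p with
  | nil => rfl
  | cons k l ih => simp [Gmap, Ginv, ih, gmap_ginv]

lemma Gmap_cons (k : ℕ) (l : List ℕ) (p : ℝ × ℝ) : Gmap (k :: l) p = Gmap l (gmap k p) := rfl

lemma Gmap_append_singleton (l : List ℕ) (k : ℕ) (p : ℝ × ℝ) :
    Gmap (l ++ [k]) p = gmap k (Gmap l p) := by
  induction l generalizing p with
  | nil => rfl
  | cons k' l ih => simp [Gmap, ih]

lemma bcz_eq_gmap {k : ℕ} {p : ℝ × ℝ} (h : p ∈ TT k) : bcz p = gmap k p := by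
  obtain ⟨_, hk⟩ := h
  simp [bcz, gmap, hk]

lemma TTlist_nil : TTlist [] = Set.univ := by
  simp [TTlist]

lemma mem_TTlist_cons {k : ℕ} {l : List ℕ} {p : ℝ × ℝ} :
    p ∈ TTlist (k :: l) ↔ p ∈ TT k ∧ bcz p ∈ TTlist l := by
  constructor
  · intro h
    rw [TTlist, Set.mem_iInter] at h
    refine ⟨by simpa using h ⟨0, by simp⟩, ?_⟩
    rw [TTlist, Set.mem_iInter]
    intro i
    have := h i.succ
    simpa [Function.iterate_succ_apply] using this
  · rintro ⟨h0, h1⟩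
    rw [TTlist, Set.mem_iInter]
    intro i
    induction i using Fin.cases with
    | zero => simpa using h0
    | succ j =>
      rw [TTlist, Set.mem_iInter] at h1
      have := h1 j
      simpa [Function.iterate_succ_apply] using this

lemma mem_TTlist_append {l : List ℕ} {k : ℕ} {p : ℝ × ℝ} :
    p ∈ TTlist (l ++ [k]) ↔ p ∈ TTlist l ∧ bcz^[l.length] p ∈ TT k := by
  induction l generalizing p with
  | nil => simp [mem_TTlist_cons, TTlist_nil]
  | cons k' l ih =>
    simp only [List.cons_append, mem_TTlist_cons, ih, List.length_cons,
      Function.iterate_succ_apply]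
    tauto

lemma iterate_eq_Gmap {l : List ℕ} {p : ℝ × ℝ} (h : p ∈ TTlist l) :
    bcz^[l.length] p = Gmap l p := by
  induction l generalizing p with
  | nil => rfl
  | cons k l ih =>
    rw [mem_TTlist_cons] at h
    rw [List.length_cons, Function.iterate_succ_apply, bcz_eq_gmap h.1, Gmap,
      ih (by rw [← bcz_eq_gmap h.1]; exact h.2)]

/-- Time reversal: the swap of `gmap k p` is again in `TT k`, and applying `gmap k` to it
returns the swap of `p`. -/
lemma swap_step {k : ℕ} {p : ℝ × ℝ} (h : p ∈ TT k) :
    Prod.swap (gmap k p) ∈ TT k ∧ gmap k (Prod.swap (gmap k p)) = Prod.swap p := by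
  obtain ⟨⟨hx0, hx1, hy0, hy1, hxy⟩, hk⟩ := h
  set x := p.1
  set y := p.2
  have h1 : (k : ℝ) ≤ (1 + x) / y := by
    have := Int.floor_le ((1 + x) / y)
    rw [hk] at this
    exact_mod_cast this
  have h2 : (1 + x) / y < k + 1 := by
    have := Int.lt_floor_add_one ((1 + x) / y)
    rw [hk] at this
    exact_mod_cast this
  have hky : (k : ℝ) * y ≤ 1 + x := by
    rw [le_div_iff₀ hy0] at h1; linarith
  have hky' : 1 + x < ((k : ℝ) + 1) * y := by
    rw [div_lt_iff₀ hy0] at h2; nlinarith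
  constructor
  · refine ⟨⟨?_, ?_, hy0, hy1, ?_⟩, ?_⟩
    · simp only [gmap, Prod.swap]; nlinarith
    · simp only [gmap, Prod.swap]; linarith
    · simp only [gmap, Prod.swap]; nlinarith
    · simp only [gmap, Prod.swap]
      rw [Int.floor_eq_iff]
      constructor
      · push_cast
        rw [le_div_iff₀ hy0]; linarith
      · push_cast
        rw [div_lt_iff₀ hy0]; nlinarith
  · simp [gmap, Prod.swap]

/-- Main induction: time reversal maps `TTlist l` into `TTlist l.reverse` and composing with
the reversed map recovers the swap. -/
lemma main_step {l : List ℕ} {p : ℝ × ℝ} (h : p ∈ TTlist l) :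
    Prod.swap (Gmap l p) ∈ TTlist l.reverse ∧
      Gmap l.reverse (Prod.swap (Gmap l p)) = Prod.swap p := by
  induction l generalizing p with
  | nil => simpa [Gmap, TTlist_nil] using trivial
  | cons k l ih =>
    rw [mem_TTlist_cons] at h
    have hq : gmap k p ∈ TTlist l := by rw [← bcz_eq_gmap h.1]; exact h.2
    obtain ⟨ih1, ih2⟩ := ih hq
    have hswap := swap_step h.1
    have hlen : (l.reverse).length = l.length := by simp
    constructor
    · rw [List.reverse_cons, mem_TTlist_append, Gmap_cons]
      refine ⟨ih1, ?_⟩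
      have hit : bcz^[l.reverse.length] ((Gmap l (gmap k p)).swap)
          = Gmap l.reverse ((Gmap l (gmap k p)).swap) := iterate_eq_Gmap ih1
      rw [hit, ih2]
      exact hswap.1
    · rw [List.reverse_cons, Gmap_append_singleton, Gmap_cons, ih2, hswap.2]

lemma image_TTlist (l : List ℕ) :
    (fun p => Prod.swap (Gmap l p)) '' TTlist l = TTlist l.reverse := by
  apply Set.Subset.antisymm
  · rintro q ⟨p, hp, rfl⟩
    exact (main_step hp).1
  · intro q hq
    have h := main_step (l := l.reverse) hq
    rw [List.reverse_reverse] at h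
    refine ⟨Prod.swap (Gmap l.reverse q), h.1, ?_⟩
    show Prod.swap (Gmap l (Prod.swap (Gmap l.reverse q))) = q
    rw [h.2, Prod.swap_swap]

/-! ### Measurability -/

lemma measurable_bcz : Measurable bcz := by
  apply Measurable.prod
  · exact measurable_snd
  · apply Measurable.sub _ measurable_fst
    apply Measurable.mul _ measurable_snd
    exact measurable_from_top.comp
      (Measurable.floor ((measurable_const.add measurable_fst).div measurable_snd))

lemma measurableSet_TT (k : ℕ) : MeasurableSet (TT k) := by
  have h : TT k = fareyTriangle ∩
      ((fun p : ℝ × ℝ => ⌊(1 + p.1) / p.2⌋) ⁻¹' {(k : ℤ)}) := rfl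
  rw [h]
  apply MeasurableSet.inter
  · have : fareyTriangle = {p : ℝ × ℝ | 0 < p.1} ∩ {p | p.1 ≤ 1} ∩ {p | 0 < p.2} ∩
        {p | p.2 ≤ 1} ∩ {p | 1 < p.1 + p.2} := by
      ext p; simp [fareyTriangle]; tauto
    rw [this]
    refine MeasurableSet.inter (MeasurableSet.inter (MeasurableSet.inter (MeasurableSet.inter
      ?_ ?_) ?_) ?_) ?_
    · exact measurableSet_lt measurable_const measurable_fst
    · exact measurableSet_le measurable_fst measurable_const
    · exact measurableSet_lt measurable_const measurable_snd
    · exact measurableSet_le measurable_snd measurable_const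
    · exact measurableSet_lt measurable_const (measurable_fst.add measurable_snd)
  · exact (Measurable.floor ((measurable_const.add measurable_fst).div measurable_snd))
      (MeasurableSet.singleton _)

lemma measurableSet_TTlist (l : List ℕ) : MeasurableSet (TTlist l) := by
  apply MeasurableSet.iInter
  intro i
  exact (measurable_bcz.iterate i.1) (measurableSet_TT _)

/-! ### Measure preservation -/

lemma measurePreserving_w (k : ℕ) :
    MeasurePreserving (fun p : ℝ × ℝ => (p.1, (k : ℝ) * p.1 - p.2)) volume volume := by
  rw [Measure.volume_eq_prod]
  exact MeasurePreserving.skew_product (g := fun a b => (k : ℝ) * a - b)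
    (MeasurePreserving.id volume)
    ((measurable_const.mul measurable_fst).sub measurable_snd)
    (Filter.Eventually.of_forall fun a =>
      (Measure.measurePreserving_sub_left volume ((k : ℝ) * a)).map_eq)

lemma measurePreserving_prodswap :
    MeasurePreserving (Prod.swap : ℝ × ℝ → ℝ × ℝ) volume volume := by
  rw [Measure.volume_eq_prod]
  exact Measure.measurePreserving_swap

lemma measurePreserving_ginv (k : ℕ) : MeasurePreserving (ginv k) volume volume := by
  have : ginv k = Prod.swap ∘ (fun p : ℝ × ℝ => (p.1, (k : ℝ) * p.1 - p.2)) := by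
    funext p; simp [ginv, Prod.swap]
  rw [this]
  exact measurePreserving_prodswap.comp (measurePreserving_w k)

lemma measurePreserving_Ginv (l : List ℕ) : MeasurePreserving (Ginv l) volume volume := by
  induction l with
  | nil => exact MeasurePreserving.id volume
  | cons k l ih =>
    have : Ginv (k :: l) = ginv k ∘ Ginv l := rfl
    rw [this]
    exact (measurePreserving_ginv k).comp ih

/-- The region of the reversed tuple has the same area: |𝒯(k_r,…,k₁)| = |𝒯(k₁,…,k_r)|. -/
theorem volume_TTlist_reverse (ks : List ℕ) (hpos : ∀ k ∈ ks, 0 < k) :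
    volume (TTlist ks.reverse) = volume (TTlist ks) := by
  rw [← image_TTlist ks]
  have himg : (fun p => Prod.swap (Gmap ks p)) '' TTlist ks
      = (fun q => Ginv ks (Prod.swap q)) ⁻¹' TTlist ks := by
    ext q
    constructor
    · rintro ⟨p, hp, rfl⟩
      simpa [Prod.swap_swap, Ginv_Gmap] using hp
    · intro hq
      exact ⟨Ginv ks (Prod.swap q), hq, by simp [Gmap_Ginv, Prod.swap_swap]⟩
  rw [himg]
  have hmp : MeasurePreserving (fun q : ℝ × ℝ => Ginv ks (Prod.swap q)) volume volume :=
    (measurePreserving_Ginv ks).comp measurePreserving_prodswap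
  exact hmp.measure_preimage (measurableSet_TTlist ks).nullMeasurableSet
end

section
/- Let r ≥ 1 and let k₁,…,k_r be positive integers with max{k₁,…,k_r} = k_j ≥ 4r+2 attained at index j. If the region 𝒯(k₁,…,k_r) is nonempty, then k_i = 1 for every index i with |i − j| = 1 and k_i = 2 for every index i with |i − j| ≥ 2. -/
open MeasureTheory

/-!
Let `(xₙ, yₙ)` be the orbit and `ε = y_j`. From `k_j ε ≤ 1 + x_j ≤ 2` and `k_j ≥ 4r + 2` we get
`(2r + 1) ε ≤ 1`. The next point is `(ε, y)` with `y > 1 - ε`, which has label `1` and is mapped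
to `(y, y - ε)`; a point `(x, x - ε)` with `2x > 1 + 3ε` has label `2` and is mapped to
`(x - ε, x - 2ε)`. So after time `j` the orbit walks down the line `y = x - ε` in steps of `ε`,
and fewer than `r` steps are not enough to leave the region of label `2`.

The past is the future of the reversed orbit: on `𝒯(k)` the swap `(x, y) ↦ (y, x)` conjugates
`T` to `T⁻¹`, and the reversed orbit passes through `(y_j, x_j) = (ε, x_j)`.
-/

lemma swap_mem_fareyTriangle {q : ℝ × ℝ} (hq : q ∈ fareyTriangle) : q.swap ∈ fareyTriangle := by
  obtain ⟨hx0, hx1, hy0, hy1, hxy⟩ := hq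
  exact ⟨hy0, hy1, hx0, hx1, by rw [Prod.fst_swap, Prod.snd_swap]; linarith⟩

lemma mem_TT_iff {k : ℕ} {q : ℝ × ℝ} :
    q ∈ TT k ↔ q ∈ fareyTriangle ∧ k * q.2 ≤ 1 + q.1 ∧ 1 + q.1 < (k + 1) * q.2 := by
  refine and_congr_right fun hq => ?_
  rw [Int.floor_eq_iff, le_div_iff₀ hq.2.2.1, div_lt_iff₀ hq.2.2.1]
  push_cast
  rfl

lemma eq_of_mem_TT_of_mem_TT {k l : ℕ} {q : ℝ × ℝ} (hk : q ∈ TT k) (hl : q ∈ TT l) : k = l := by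
  exact_mod_cast hk.2.symm.trans hl.2

lemma bcz_of_mem_TT {k : ℕ} {q : ℝ × ℝ} (h : q ∈ TT k) : bcz q = (q.2, k * q.2 - q.1) := by
  simp [bcz, h.2]

lemma bcz_mem_fareyTriangle {k : ℕ} {q : ℝ × ℝ} (h : q ∈ TT k) : bcz q ∈ fareyTriangle := by
  obtain ⟨⟨hx0, hx1, hy0, hy1, hxy⟩, hlo, hhi⟩ := mem_TT_iff.mp h
  rw [bcz_of_mem_TT h]
  refine ⟨hy0, hy1, ?_, ?_, ?_⟩ <;> dsimp only <;> linarith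

lemma swap_bcz_mem_TT {k : ℕ} {q : ℝ × ℝ} (h : q ∈ TT k) : (bcz q).swap ∈ TT k := by
  obtain ⟨⟨hx0, hx1, hy0, hy1, hxy⟩, hlo, hhi⟩ := mem_TT_iff.mp h
  rw [bcz_of_mem_TT h, mem_TT_iff]
  refine ⟨⟨?_, ?_, hy0, hy1, ?_⟩, ?_, ?_⟩ <;> dsimp only [Prod.swap] <;> linarith

lemma bcz_swap_bcz {k : ℕ} {q : ℝ × ℝ} (h : q ∈ TT k) : bcz (bcz q).swap = q.swap := by
  rw [bcz_of_mem_TT (swap_bcz_mem_TT h), bcz_of_mem_TT h]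
  ext <;> simp

lemma mul_snd_le_two {k : ℕ} {q : ℝ × ℝ} (h : q ∈ TT k) : k * q.2 ≤ 2 := by
  obtain ⟨⟨-, hx1, -⟩, hlo, -⟩ := mem_TT_iff.mp h
  linarith

lemma mem_TT_one {q : ℝ × ℝ} (hq : q ∈ fareyTriangle) (h : 3 * q.1 ≤ 1) : q ∈ TT 1 := by
  obtain ⟨hx0, hx1, hy0, hy1, hxy⟩ := hq
  refine mem_TT_iff.mpr ⟨⟨hx0, hx1, hy0, hy1, hxy⟩, ?_, ?_⟩ <;> push_cast <;> linarith

lemma mem_TT_two_of_snd_eq_fst_sub {q : ℝ × ℝ} {ε : ℝ} (hq : q ∈ fareyTriangle) (hε : 0 ≤ ε)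
    (hline : q.2 = q.1 - ε) (hfst : 1 + 3 * ε < 2 * q.1) : q ∈ TT 2 := by
  obtain ⟨hx0, hx1, hy0, hy1, hxy⟩ := hq
  refine mem_TT_iff.mpr ⟨⟨hx0, hx1, hy0, hy1, hxy⟩, ?_, ?_⟩ <;> push_cast <;> linarith

lemma mem_TT_of_orbit_from_small_fst {m : ℕ} {q : ℕ → ℝ × ℝ} (hq0 : q 0 ∈ fareyTriangle)
    (hstep : ∀ n < m, q (n + 1) = bcz (q n)) (hε : (2 * m + 1) * (q 0).1 ≤ 1) :
    ∀ n < m, q n ∈ TT (if n = 0 then 1 else 2) := by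
  set ε := (q 0).1
  set y := (q 0).2
  have hεpos : 0 < ε := hq0.1
  have hy : 1 - ε < y := by linarith [hq0.2.2.2.2]
  suffices key : ∀ n < m,
      q n ∈ TT (if n = 0 then 1 else 2) ∧ q (n + 1) = (y - n * ε, y - (n + 1) * ε) from
    fun n hn => (key n hn).1
  intro n
  induction n with
  | zero =>
    intro hm
    have h1 : q 0 ∈ TT 1 := mem_TT_one hq0 (by
      have : (1 : ℝ) ≤ m := by exact_mod_cast hm
      nlinarith)
    refine ⟨h1, ?_⟩
    rw [hstep 0 hm, bcz_of_mem_TT h1]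
    simp [ε, y]
  | succ n ih =>
    intro hm
    obtain ⟨hprev, hqn⟩ := ih (by omega)
    have hmem : q (n + 1) ∈ fareyTriangle := hstep n (by omega) ▸ bcz_mem_fareyTriangle hprev
    have hn : (2 * n + 5) * ε ≤ 1 := by
      have : (n : ℝ) + 2 ≤ m := by exact_mod_cast hm
      nlinarith
    have h2 : q (n + 1) ∈ TT 2 :=
      mem_TT_two_of_snd_eq_fst_sub hmem hεpos.le (by rw [hqn]; ring) (by rw [hqn]; dsimp only; nlinarith)
    refine ⟨h2, ?_⟩
    rw [hstep (n + 1) hm, bcz_of_mem_TT h2, hqn]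
    push_cast
    ext <;> ring

lemma mem_TTlist_iff {ks : List ℕ} {p : ℝ × ℝ} :
    p ∈ TTlist ks ↔ ∀ n (hn : n < ks.length), bcz^[n] p ∈ TT ks[n] := by
  simp [TTlist, Fin.forall_iff]

section Labels

variable {ks : List ℕ} {p : ℝ × ℝ} {j : ℕ}

lemma getElem_after_of_small_snd (hp : ∀ n (hn : n < ks.length), bcz^[n] p ∈ TT ks[n])
    (hj : j < ks.length) (hε : (2 * ks.length + 1) * (bcz^[j] p).2 ≤ 1)
    (i : ℕ) (hi : i < ks.length) (hji : j < i) : ks[i] = if i = j + 1 then 1 else 2 := by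
  have hstep : ∀ n < ks.length - (j + 1),
      bcz^[j + 1 + (n + 1)] p = bcz (bcz^[j + 1 + n] p) := fun n _ =>
    Function.iterate_succ_apply' bcz (j + 1 + n) p
  have hq0 : bcz^[j + 1 + 0] p = bcz (bcz^[j] p) := Function.iterate_succ_apply' bcz j p
  have hlabels := mem_TT_of_orbit_from_small_fst (q := fun n => bcz^[j + 1 + n] p)
    (m := ks.length - (j + 1)) (hq0 ▸ bcz_mem_fareyTriangle (hp j hj)) hstep
    (by
      simp only [hq0, bcz]
      have : ((ks.length - (j + 1) : ℕ) : ℝ) ≤ ks.length := by exact_mod_cast Nat.sub_le _ _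
      nlinarith [(hp j hj).1.2.2.1])
    (i - (j + 1)) (by omega)
  refine eq_of_mem_TT_of_mem_TT (hp i hi) ?_
  simpa [show j + 1 + (i - (j + 1)) = i by omega, show i - (j + 1) = 0 ↔ i = j + 1 by omega]
    using hlabels

lemma getElem_before_of_small_snd (hp : ∀ n (hn : n < ks.length), bcz^[n] p ∈ TT ks[n])
    (hj : j < ks.length) (hε : (2 * ks.length + 1) * (bcz^[j] p).2 ≤ 1)
    (i : ℕ) (hij : i < j) : ks[i] = if i + 1 = j then 1 else 2 := by
  have hpred : ∀ n < j, bcz^[j - n] p = bcz (bcz^[j - (n + 1)] p) := fun n hn => by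
    rw [← Function.iterate_succ_apply' bcz]
    congr 1
    omega
  have hstep : ∀ n < j, (bcz^[j - (n + 1)] p).swap = bcz (bcz^[j - n] p).swap := fun n hn => by
    rw [hpred n hn, bcz_swap_bcz (hp _ (by omega))]
  have hlabels := mem_TT_of_orbit_from_small_fst (q := fun n => (bcz^[j - n] p).swap) (m := j)
    (swap_mem_fareyTriangle (hp j hj).1) hstep
    (by
      simp only [Nat.sub_zero, Prod.fst_swap]
      have : (j : ℝ) ≤ ks.length := by exact_mod_cast hj.le
      nlinarith [(hp j hj).1.2.2.1])
    (j - (i + 1)) (by omega)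
  refine eq_of_mem_TT_of_mem_TT (swap_bcz_mem_TT (hp i (by omega))) ?_
  rw [← Function.iterate_succ_apply' bcz]
  simpa [show j - (j - (i + 1)) = i + 1 by omega, show j - (i + 1) = 0 ↔ i + 1 = j by omega]
    using hlabels

end Labels

theorem tuple_of_large_entry_general (r : ℕ) (ks : List ℕ) (hlen : ks.length = r)
    (j : Fin ks.length)
    (hbig : 4 * r + 2 ≤ ks.get j)
    (hne : (TTlist ks).Nonempty) :
    ∀ i : Fin ks.length,
      ((((i : ℕ) : ℤ) - ((j : ℕ) : ℤ)).natAbs = 1 → ks.get i = 1) ∧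
      (2 ≤ (((i : ℕ) : ℤ) - ((j : ℕ) : ℤ)).natAbs → ks.get i = 2) := by
  obtain ⟨p, hp⟩ := hne
  rw [mem_TTlist_iff] at hp
  have hε : (2 * ks.length + 1) * (bcz^[j] p).2 ≤ 1 := by
    have hk : (4 * ks.length + 2 : ℝ) ≤ ks[(j : ℕ)] := by
      rw [← hlen] at hbig
      exact_mod_cast hbig
    nlinarith [mul_snd_le_two (hp j j.2), (hp j j.2).1.2.2.1]
  intro i
  simp only [List.get_eq_getElem]
  rcases lt_trichotomy (i : ℕ) j with hij | hij | hij
  · rw [getElem_before_of_small_snd hp j.2 hε i hij]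
    constructor <;> intro h <;> split_ifs <;> omega
  · simp [hij]
  · rw [getElem_after_of_small_snd hp j.2 hε i i.2 hij]
    constructor <;> intro h <;> split_ifs <;> omega

/-- If the maximal entry k_j of (k₁,…,k_r) satisfies k_j ≥ 4r+2 and 𝒯(k₁,…,k_r) is nonempty,
then k_i = 1 whenever |i − j| = 1 and k_i = 2 whenever |i − j| ≥ 2. -/
theorem tuple_of_large_entry (r : ℕ) (hr : 1 ≤ r) (ks : List ℕ) (hlen : ks.length = r)
    (hpos : ∀ k ∈ ks, 0 < k) (j : Fin ks.length)
    (hmax : ∀ i : Fin ks.length, ks.get i ≤ ks.get j)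
    (hbig : 4 * r + 2 ≤ ks.get j)
    (hne : (TTlist ks).Nonempty) :
    ∀ i : Fin ks.length,
      ((((i : ℕ) : ℤ) - ((j : ℕ) : ℤ)).natAbs = 1 → ks.get i = 1) ∧
      (2 ≤ (((i : ℕ) : ℤ) - ((j : ℕ) : ℤ)).natAbs → ks.get i = 2) :=
  tuple_of_large_entry_general r ks hlen j hbig hne
end

section
/- For every integer n ≥ 2 and every positive integer k, the region 𝒯(3,2ⁿ,1,k) (the tuple 3, then n entries equal to 2, then 1, then k) is nonempty if and only if 4n+2 ≤ k ≤ 4n+8, and the two-dimensional Lebesgue measure of the union ⋃_{k=4n+2}^{4n+8} 𝒯(3,2ⁿ,1,k) equals 2/((2n+1)(2n+3)(2n+5)). -/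
/-
Along a run of digits `2` the BCZ map is `(u, v) ↦ (v, 2v - u)`, which preserves `v - u`, so the
orbit of `(x, y)` through the digits `3, 2ⁿ, 1` is explicit and every condition on it is linear.
For `n ≥ 2` this makes `𝒯(3, 2ⁿ, 1, k)` the quadrilateral `Q` with vertices
`((2n-1)/(2n+1), n/(2n+1))`, `((2n+1)/(2n+3), (n+1)/(2n+3))`, `(1, (n+3)/(2n+5))`,
`(1, (n+2)/(2n+3))`, cut down to the points where the next digit, the integer part of a
linear-fractional function of `(x, y)`, equals `k`. That function takes the values
`4n + 2, 4n + 5, 4n + 9, 4n + 6` at the vertices, so it maps `Q` onto `(4n + 2, 4n + 9)`: this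
gives the range of `k`, and the union over that range is `Q`, whose area is an integral of
piecewise affine functions.
-/

open MeasureTheory

open Set

theorem volume_region_between_oc_eq_integral {α : Type*} [MeasurableSpace α] {μ : Measure α}
    [SigmaFinite μ] {f g : α → ℝ} {s : Set α} (hf : Measurable f) (hg : Measurable g)
    (f_int : IntegrableOn f s μ) (g_int : IntegrableOn g s μ) (hs : MeasurableSet s)
    (hfg : ∀ x ∈ s, f x ≤ g x) :
    μ.prod volume {p : α × ℝ | p.1 ∈ s ∧ p.2 ∈ Ioc (f p.1) (g p.1)} =
      ENNReal.ofReal (∫ x in s, (g - f) x ∂μ) := by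
  rw [← volume_regionBetween_eq_integral f_int g_int hs hfg,
    Measure.prod_apply (measurableSet_region_between_oc hf hg hs),
    Measure.prod_apply (measurableSet_regionBetween hf hg hs)]
  refine lintegral_congr fun x => ?_
  by_cases hx : x ∈ s
  · simp only [regionBetween, preimage, mem_ofPred_eq, hx, true_and]
    exact Real.volume_Ioc.trans Real.volume_Ioo.symm
  · simp [regionBetween, hx]

theorem intervalIntegral.integral_affine (α β u v : ℝ) :
    ∫ x in u..v, (α + β * x) = α * (v - u) + β * (v ^ 2 - u ^ 2) / 2 := by
  rw [intervalIntegral.integral_add (f := fun _ => α) intervalIntegrable_const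
      ((continuous_const_mul β).intervalIntegrable u v),
    intervalIntegral.integral_const, intervalIntegral.integral_const_mul, integral_id, smul_eq_mul]
  ring

theorem intervalIntegral.integral_line_sub_line (c e c' e' u v : ℝ) :
    ∫ x in u..v, ((1 + c * x) / e - (1 + c' * x) / e') =
      (1 / e - 1 / e') * (v - u) + (c / e - c' / e') * (v ^ 2 - u ^ 2) / 2 := by
  have h (x : ℝ) :
      (1 + c * x) / e - (1 + c' * x) / e' = (1 / e - 1 / e') + (c / e - c' / e') * x := by
    ring
  simp_rw [h]
  exact integral_affine _ _ u v

theorem exists_mem_Ioo_natFloor_eq_iff {R : Type*} [Field R] [LinearOrder R]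
    [IsStrictOrderedRing R] [FloorSemiring R] (a b k : ℕ) :
    (∃ t ∈ Ioo (a : R) b, ⌊t⌋₊ = k) ↔ k ∈ Ico a b := by
  constructor
  · rintro ⟨t, ⟨hat, htb⟩, rfl⟩
    exact ⟨Nat.le_floor hat.le, (Nat.floor_lt ((Nat.cast_nonneg a).trans hat.le)).2 htb⟩
  · rintro ⟨hak, hkb⟩
    have hak' : (a : R) ≤ k := by exact_mod_cast hak
    have hkb' : (k : R) + 1 ≤ b := by exact_mod_cast hkb
    refine ⟨k + 1 / 2, ⟨by linarith, by linarith⟩, ?_⟩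
    rw [Nat.floor_eq_iff (by positivity)]
    constructor <;> linarith

lemma mem_TT_iff_s15 {m : ℕ} {u v : ℝ} :
    (u, v) ∈ TT m ↔ 0 < u ∧ u ≤ 1 ∧ 0 < v ∧ v ≤ 1 ∧ 1 < u + v ∧
      m * v ≤ 1 + u ∧ 1 + u < (m + 1) * v := by
  simp only [TT, fareyTriangle, mem_ofPred_eq, Int.floor_eq_iff, Int.cast_natCast, and_assoc]
  refine and_congr_right fun hu => and_congr_right fun _ => and_congr_right fun hv => ?_
  rw [le_div_iff₀ hv, div_lt_iff₀ hv]

lemma mem_TTlist_nil (p : ℝ × ℝ) : p ∈ TTlist [] := by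
  simp [TTlist]

lemma mem_TTlist_cons_s15 {m : ℕ} {ks : List ℕ} {u v : ℝ} :
    (u, v) ∈ TTlist (m :: ks) ↔ (u, v) ∈ TT m ∧ (v, m * v - u) ∈ TTlist ks := by
  simp only [TTlist, mem_iInter, mem_preimage, Fin.forall_fin_succ, List.length_cons,
    Fin.val_zero, Function.iterate_zero, id, List.get_eq_getElem, Fin.val_succ,
    Function.iterate_succ_apply, List.getElem_cons_zero, List.getElem_cons_succ]
  refine and_congr_right fun h => ?_
  have hfl : ⌊(1 + u) / v⌋ = (m : ℤ) := h.2
  simp [bcz, hfl]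

/-- Each digit `2` sends `(u, v)` to `(v, 2v - u)` and so preserves `v - u`: after `m` of them the
point is `(u + m(v - u), v + m(v - u))`, and the digit `1` sends it to `(v + m(v - u), v - u)`. -/
lemma mem_TTlist_twos_one_iff (m k : ℕ) (u v : ℝ) :
    (u, v) ∈ TTlist (List.replicate m 2 ++ [1, k]) ↔
      0 < u ∧ 1 < u + v ∧ v + m * (v - u) ≤ 1 ∧ 1 < v + (m + 1) * (v - u) ∧
        k * (v - u) ≤ 1 + v + m * (v - u) ∧ 1 + v + m * (v - u) < (k + 1) * (v - u) := by
  induction m generalizing u v with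
  | zero =>
    simp only [List.replicate_zero, List.nil_append, mem_TTlist_cons_s15, mem_TT_iff_s15,
      iff_true_intro (mem_TTlist_nil _), and_true]
    push_cast
    constructor
    · rintro ⟨⟨hu, -, -, -, huv, -, h1⟩, -, hv1, -, -, -, hk, hk'⟩
      refine ⟨hu, huv, by linarith, by linarith, by linarith, by linarith⟩
    · rintro ⟨hu, huv, h1, h1', hk, hk'⟩
      refine ⟨⟨hu, by linarith, by linarith, by linarith, huv, by linarith, by linarith⟩,
        by linarith, by linarith, by linarith, by linarith, by linarith, by linarith, by linarith⟩
  | succ m ih =>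
    rw [List.replicate_succ, List.cons_append, mem_TTlist_cons_s15, ih, mem_TT_iff_s15]
    push_cast
    constructor
    · rintro ⟨⟨hu, -, -, -, huv, -, -⟩, -, -, h2, h2', hk, hk'⟩
      refine ⟨hu, huv, by linarith, by linarith, by linarith, by linarith⟩
    · rintro ⟨hu, huv, h2, h2', hk, hk'⟩
      have hd : 0 < v - u := by linarith
      have hmd : 0 ≤ (m : ℝ) * (v - u) := by positivity
      refine ⟨⟨hu, by linarith, by linarith, by linarith, huv, by linarith, by linarith⟩,
        by linarith, by linarith, by linarith, by linarith, by linarith, by linarith⟩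

def threeTwosOneRegion (n : ℕ) : Set (ℝ × ℝ) :=
  {p | 1 < 4 * p.2 - p.1 ∧ p.1 ≤ 1 ∧ p.2 + (n + 1) * (2 * p.2 - p.1) ≤ 1 ∧
    1 < p.2 + (n + 2) * (2 * p.2 - p.1)}

/-- After the digits `3, 2ⁿ, 1` the orbit of `(x, y)` is at `(y + (n + 1)(2y - x), 2y - x)`, so the
next digit is the integer part of this ratio. -/
noncomputable def lastDigitRatio (n : ℕ) (p : ℝ × ℝ) : ℝ :=
  (1 + p.2 + (n + 1) * (2 * p.2 - p.1)) / (2 * p.2 - p.1)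

lemma sub_pos_of_mem_threeTwosOneRegion {n : ℕ} {p : ℝ × ℝ} (hp : p ∈ threeTwosOneRegion n) :
    0 < 2 * p.2 - p.1 := by
  obtain ⟨-, -, h3, h4⟩ := hp
  linarith

lemma lastDigitRatio_mem_Ioo {n : ℕ} {p : ℝ × ℝ} (hp : p ∈ threeTwosOneRegion n) :
    lastDigitRatio n p ∈ Ioo (4 * n + 2 : ℝ) (4 * n + 9) := by
  have hd := sub_pos_of_mem_threeTwosOneRegion hp
  obtain ⟨h1, h2, h3, h4⟩ := hp
  rw [lastDigitRatio, mem_Ioo, lt_div_iff₀ hd, div_lt_iff₀ hd]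
  constructor <;> linarith

lemma natFloor_lastDigitRatio_eq_iff {n k : ℕ} {p : ℝ × ℝ} (hp : p ∈ threeTwosOneRegion n) :
    ⌊lastDigitRatio n p⌋₊ = k ↔
      k * (2 * p.2 - p.1) ≤ 1 + p.2 + (n + 1) * (2 * p.2 - p.1) ∧
        1 + p.2 + (n + 1) * (2 * p.2 - p.1) < (k + 1) * (2 * p.2 - p.1) := by
  have hd := sub_pos_of_mem_threeTwosOneRegion hp
  rw [Nat.floor_eq_iff (by linarith [(lastDigitRatio_mem_Ioo hp).1]), lastDigitRatio,
    le_div_iff₀ hd, div_lt_iff₀ hd]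

lemma mem_TTlist_three_twos_one_iff {n : ℕ} (hn : 2 ≤ n) (k : ℕ) (p : ℝ × ℝ) :
    p ∈ TTlist (3 :: (List.replicate n 2 ++ [1, k])) ↔
      p ∈ threeTwosOneRegion n ∧ ⌊lastDigitRatio n p⌋₊ = k := by
  obtain ⟨x, y⟩ := p
  rw [mem_TTlist_cons_s15, mem_TTlist_twos_one_iff, mem_TT_iff_s15]
  push_cast
  constructor
  · rintro ⟨⟨-, hx1, -, -, -, -, h3⟩, -, hyv, h2, h1, hk, hk'⟩
    have hreg : (x, y) ∈ threeTwosOneRegion n :=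
      ⟨by linarith, hx1, by linarith, by linarith⟩
    exact ⟨hreg, (natFloor_lastDigitRatio_eq_iff hreg).2 ⟨by linarith, by linarith⟩⟩
  · rintro ⟨hreg, hk⟩
    have hd := sub_pos_of_mem_threeTwosOneRegion hreg
    rw [natFloor_lastDigitRatio_eq_iff hreg] at hk
    obtain ⟨h3, hx1, h2, h1⟩ := hreg
    obtain ⟨hk, hk'⟩ := hk
    dsimp only at *
    have hn' : (2 : ℝ) ≤ n := by exact_mod_cast hn
    have hnd : 2 * (2 * y - x) ≤ n * (2 * y - x) := by gcongr
    refine ⟨⟨by linarith, hx1, by linarith, by linarith, by linarith, by linarith,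
      by linarith⟩, by linarith, by linarith, by linarith, by linarith, by linarith,
      by linarith⟩

/-- The witnesses lie on the edges `y + (n + 1)(2y - x) = 1` and `x = 1` of the region, along which
the ratio sweeps `(4n + 2, 4n + 6]` and `[4n + 6, 4n + 9)` respectively. -/
lemma exists_mem_threeTwosOneRegion_lastDigitRatio_eq (n : ℕ) {t : ℝ}
    (ht : t ∈ Ioo (4 * n + 2 : ℝ) (4 * n + 9)) :
    ∃ p ∈ threeTwosOneRegion n, lastDigitRatio n p = t := by
  obtain ⟨ht1, ht2⟩ := ht
  rcases le_or_gt t (4 * n + 6) with ht6 | ht6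
  · have ht0 : 0 < t := by linarith
    obtain ⟨d, hd, hdt⟩ : ∃ d : ℝ, 0 < d ∧ t * d = 2 :=
      ⟨2 / t, div_pos two_pos ht0, mul_div_cancel₀ 2 ht0.ne'⟩
    have h1 : (4 * n + 2) * d < t * d := mul_lt_mul_of_pos_right ht1 hd
    have h6 : t * d ≤ (4 * n + 6) * d := mul_le_mul_of_nonneg_right ht6 hd.le
    refine ⟨(2 * (1 - (n + 1) * d) - d, 1 - (n + 1) * d), ?_, ?_⟩
    · refine ⟨?_, ?_, ?_, ?_⟩ <;> dsimp only <;> linarith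
    · rw [lastDigitRatio, div_eq_iff (by dsimp only; linarith)]
      dsimp only
      linarith
  · obtain ⟨d, hd, hdt⟩ : ∃ d : ℝ, 0 < d ∧ (2 * t - 2 * n - 3) * d = 3 :=
      ⟨3 / (2 * t - 2 * n - 3), div_pos three_pos (by linarith), mul_div_cancel₀ 3 (by linarith)⟩
    have h6 : (4 * n + 6) * d < t * d := mul_lt_mul_of_pos_right ht6 hd
    have h9 : t * d < (4 * n + 9) * d := mul_lt_mul_of_pos_right ht2 hd
    refine ⟨(1, (1 + d) / 2), ?_, ?_⟩
    · refine ⟨?_, le_rfl, ?_, ?_⟩ <;> dsimp only <;> linarith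
    · rw [lastDigitRatio, div_eq_iff (by dsimp only; linarith)]
      dsimp only
      linarith

lemma lastDigitRatio_image_threeTwosOneRegion (n : ℕ) :
    lastDigitRatio n '' threeTwosOneRegion n = Ioo (4 * n + 2 : ℝ) (4 * n + 9) :=
  Subset.antisymm (image_subset_iff.2 fun _ => lastDigitRatio_mem_Ioo)
    fun _ => exists_mem_threeTwosOneRegion_lastDigitRatio_eq n

lemma natFloor_lastDigitRatio_mem_Ico {n : ℕ} {p : ℝ × ℝ} (hp : p ∈ threeTwosOneRegion n) :
    ⌊lastDigitRatio n p⌋₊ ∈ Ico (4 * n + 2) (4 * n + 9) := by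
  refine (exists_mem_Ioo_natFloor_eq_iff (R := ℝ) _ _ _).1 ⟨_, ?_, rfl⟩
  exact_mod_cast lastDigitRatio_mem_Ioo hp

lemma TTlist_three_twos_one_nonempty_iff {n : ℕ} (hn : 2 ≤ n) (k : ℕ) :
    (TTlist (3 :: (List.replicate n 2 ++ [1, k]))).Nonempty ↔
      k ∈ Ico (4 * n + 2) (4 * n + 9) := by
  rw [← exists_mem_Ioo_natFloor_eq_iff (R := ℝ)]
  push_cast
  simp only [Set.Nonempty, mem_TTlist_three_twos_one_iff hn,
    ← lastDigitRatio_image_threeTwosOneRegion, exists_mem_image]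

lemma iUnion_TTlist_three_twos_one {n : ℕ} (hn : 2 ≤ n) :
    ⋃ k ∈ Finset.Icc (4 * n + 2) (4 * n + 8), TTlist (3 :: (List.replicate n 2 ++ [1, k])) =
      threeTwosOneRegion n := by
  ext p
  simp only [mem_iUnion, Finset.mem_Icc, exists_prop, mem_TTlist_three_twos_one_iff hn]
  refine ⟨fun ⟨_, _, hp, _⟩ => hp, fun hp => ⟨_, ?_, hp, rfl⟩⟩
  obtain ⟨hlow, hup⟩ := natFloor_lastDigitRatio_mem_Ico hp
  omega

noncomputable def lowerEdge (n : ℕ) (x : ℝ) : ℝ :=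
  max ((1 + x) / 4) ((1 + (n + 2) * x) / (2 * n + 5))

noncomputable def upperEdge (n : ℕ) (x : ℝ) : ℝ :=
  (1 + (n + 1) * x) / (2 * n + 3)

lemma threeTwosOneRegion_eq (n : ℕ) :
    threeTwosOneRegion n = {p : ℝ × ℝ | p.1 ∈ Ioc ((2 * n - 1 : ℝ) / (2 * n + 1)) 1 ∧
      p.2 ∈ Ioc (lowerEdge n p.1) (upperEdge n p.1)} := by
  have h1 : (0 : ℝ) < 2 * n + 1 := by positivity
  have h3 : (0 : ℝ) < 2 * n + 3 := by positivity
  have h5 : (0 : ℝ) < 2 * n + 5 := by positivity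
  ext ⟨x, y⟩
  simp only [threeTwosOneRegion, lowerEdge, upperEdge, mem_ofPred_eq, mem_Ioc, max_lt_iff,
    div_lt_iff₀ h5, div_lt_iff₀ (four_pos : (0 : ℝ) < 4), le_div_iff₀ h3]
  constructor
  · rintro ⟨hA, hB, hC, hD⟩
    exact ⟨⟨by rw [div_lt_iff₀ h1]; nlinarith, hB⟩, ⟨by linarith, by linarith⟩, by linarith⟩
  · rintro ⟨⟨-, hB⟩, ⟨hA, hD⟩, hC⟩
    exact ⟨by linarith, hB, by linarith, by linarith⟩

lemma lowerEdge_le_upperEdge {n : ℕ} {x : ℝ} (hx : x ∈ Ioc ((2 * n - 1 : ℝ) / (2 * n + 1)) 1) :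
    lowerEdge n x ≤ upperEdge n x := by
  have h1 : (0 : ℝ) < 2 * n + 1 := by positivity
  obtain ⟨hax, hx1⟩ := hx
  rw [div_lt_iff₀ h1] at hax
  rw [lowerEdge, upperEdge, max_le_iff, div_le_div_iff₀ four_pos (by positivity),
    div_le_div_iff₀ (by positivity) (by positivity)]
  constructor <;> nlinarith

lemma integral_upperEdge_sub_lowerEdge (n : ℕ) :
    ∫ x in (2 * n - 1 : ℝ) / (2 * n + 1)..1, (upperEdge n - lowerEdge n) x =
      2 / ((2 * (n : ℝ) + 1) * (2 * (n : ℝ) + 3) * (2 * (n : ℝ) + 5)) := by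
  have h1 : (0 : ℝ) < 2 * n + 1 := by positivity
  have h3 : (0 : ℝ) < 2 * n + 3 := by positivity
  have h5 : (0 : ℝ) < 2 * n + 5 := by positivity
  set a : ℝ := (2 * n - 1) / (2 * n + 1) with ha
  -- the two pieces of `lowerEdge` cross at `b`
  set b : ℝ := (2 * n + 1) / (2 * n + 3) with hb
  have hab : a ≤ b := by rw [ha, hb, div_le_div_iff₀ h1 h3]; nlinarith
  have hb1 : b ≤ 1 := by rw [hb, div_le_one h3]; linarith
  have hcont : Continuous (upperEdge n - lowerEdge n) := by
    unfold upperEdge lowerEdge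
    fun_prop
  have left : ∫ x in a..b, (upperEdge n - lowerEdge n) x =
      ∫ x in a..b, ((1 + (n + 1) * x) / (2 * n + 3) - (1 + 1 * x) / 4) := by
    refine intervalIntegral.integral_congr fun x hx => ?_
    rw [uIcc_of_le hab, mem_Icc, hb, le_div_iff₀ h3] at hx
    rw [Pi.sub_apply, upperEdge, lowerEdge, max_eq_left, one_mul]
    rw [div_le_div_iff₀ h5 four_pos]
    nlinarith
  have right : ∫ x in b..1, (upperEdge n - lowerEdge n) x =
      ∫ x in b..1, ((1 + (n + 1) * x) / (2 * n + 3) - (1 + (n + 2) * x) / (2 * n + 5)) := by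
    refine intervalIntegral.integral_congr fun x hx => ?_
    rw [uIcc_of_le hb1, mem_Icc, hb, div_le_iff₀ h3] at hx
    rw [Pi.sub_apply, upperEdge, lowerEdge, max_eq_right]
    rw [div_le_div_iff₀ four_pos h5]
    nlinarith
  rw [← intervalIntegral.integral_add_adjacent_intervals (hcont.intervalIntegrable a b)
      (hcont.intervalIntegrable b 1), left, right, intervalIntegral.integral_line_sub_line,
    intervalIntegral.integral_line_sub_line, ha, hb]
  field_simp
  ring

lemma volume_threeTwosOneRegion (n : ℕ) :
    volume (threeTwosOneRegion n) =
      ENNReal.ofReal (2 / ((2 * (n : ℝ) + 1) * (2 * (n : ℝ) + 3) * (2 * (n : ℝ) + 5))) := by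
  have hlower : Continuous (lowerEdge n) := by unfold lowerEdge; fun_prop
  have hupper : Continuous (upperEdge n) := by unfold upperEdge; fun_prop
  have ha1 : (2 * n - 1 : ℝ) / (2 * n + 1) ≤ 1 := by rw [div_le_one (by positivity)]; linarith
  rw [threeTwosOneRegion_eq, Measure.volume_eq_prod,
    volume_region_between_oc_eq_integral hlower.measurable hupper.measurable
      hlower.integrableOn_Ioc hupper.integrableOn_Ioc measurableSet_Ioc
      fun _ => lowerEdge_le_upperEdge,
    ← intervalIntegral.integral_of_le ha1, integral_upperEdge_sub_lowerEdge]

/-- For n ≥ 2, 𝒯(3,2ⁿ,1,k) is nonempty iff 4n+2 ≤ k ≤ 4n+8, and the area of the union of the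
nonempty regions 𝒯(3,2ⁿ,1,k), 4n+2 ≤ k ≤ 4n+8, equals 2/((2n+1)(2n+3)(2n+5)). -/
theorem TT_three_twos_one_k (n : ℕ) (hn : 2 ≤ n) :
    (∀ k : ℕ, 0 < k →
      ((TTlist (3 :: (List.replicate n 2 ++ [1, k]))).Nonempty ↔
        4 * n + 2 ≤ k ∧ k ≤ 4 * n + 8)) ∧
    volume (⋃ k ∈ Finset.Icc (4 * n + 2) (4 * n + 8),
        TTlist (3 :: (List.replicate n 2 ++ [1, k]))) =
      ENNReal.ofReal (2 / ((2 * (n : ℝ) + 1) * (2 * (n : ℝ) + 3) * (2 * (n : ℝ) + 5))) := by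
  refine ⟨fun k _ => ?_, ?_⟩
  · rw [TTlist_three_twos_one_nonempty_iff hn, mem_Ico, Nat.lt_succ_iff]
  · rw [iUnion_TTlist_three_twos_one hn, volume_threeTwosOneRegion]
end
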